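/- arXiv:2509.06480 — 2 statements merged into one kernel-verified Lean document; each statement's English description precedes it below -/
import Mathlib

section
/- Let H be a real Hilbert space, a < b real numbers with τ = b − a, and p : ℝ → H a function such that p has derivative p′(t) and p′ has derivative p″(t) at every t ∈ [a,b], with p″ continuous on [a,b]. Then the backward-Euler consistency error satisfies ‖p′(b) − (p(b) − p(a))/τ‖² ≤ (τ/3) ∫_a^b ‖p″(t)‖² dt. -/
/-!
Taylor's formula with integral remainder at the right end point gives
`τ • p'(b) - (p(b) - p(a)) = ∫_a^b (t - a) • p''(t) dt`, and by Cauchy–Schwarz the square of the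
norm of this integral is at most `(∫_a^b (t - a)² dt) (∫_a^b ‖p''‖²) = (τ³/3) ∫_a^b ‖p''‖²`.
Dividing by `τ²` gives the estimate.
-/

open intervalIntegral

namespace MeasureTheory

theorem integral_mul_sq_le_integral_sq_mul_integral_sq {α : Type*} [MeasurableSpace α]
    {μ : Measure α} {f g : α → ℝ} (hf : Integrable (fun x => f x ^ 2) μ)
    (hg : Integrable (fun x => g x ^ 2) μ) (hfg : Integrable (fun x => f x * g x) μ) :
    (∫ x, f x * g x ∂μ) ^ 2 ≤ (∫ x, f x ^ 2 ∂μ) * ∫ x, g x ^ 2 ∂μ := by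
  have hquadratic : ∀ s : ℝ, 0 ≤ (∫ x, g x ^ 2 ∂μ) * (s * s) + (-2 * ∫ x, f x * g x ∂μ) * s
      + ∫ x, f x ^ 2 ∂μ := by
    intro s
    have hsum : Integrable (fun x => s ^ 2 * g x ^ 2 + -2 * s * (f x * g x)) μ :=
      (hg.const_mul _).add (hfg.const_mul _)
    have hexpand : ∫ x, (s * g x - f x) ^ 2 ∂μ = s ^ 2 * (∫ x, g x ^ 2 ∂μ)
        + (-2 * s) * (∫ x, f x * g x ∂μ) + ∫ x, f x ^ 2 ∂μ := by
      rw [← integral_const_mul, ← integral_const_mul,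
        ← integral_add (hg.const_mul _) (hfg.const_mul _), ← integral_add hsum hf]
      exact integral_congr_ae (.of_forall fun x => by ring)
    have hnonneg : 0 ≤ ∫ x, (s * g x - f x) ^ 2 ∂μ :=
      integral_nonneg fun x => sq_nonneg _
    nlinarith
  have hdiscrim := discrim_le_zero hquadratic
  rw [discrim] at hdiscrim
  linarith

end MeasureTheory

theorem intervalIntegral.integral_mul_sq_le_integral_sq_mul_integral_sq {a b : ℝ} (hab : a ≤ b)
    {f g : ℝ → ℝ} (hf : ContinuousOn f (Set.Icc a b)) (hg : ContinuousOn g (Set.Icc a b)) :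
    (∫ t in a..b, f t * g t) ^ 2 ≤ (∫ t in a..b, f t ^ 2) * ∫ t in a..b, g t ^ 2 := by
  rw [← Set.uIcc_of_le hab] at hf hg
  simp only [integral_of_le hab]
  exact MeasureTheory.integral_mul_sq_le_integral_sq_mul_integral_sq
    ((hf.pow 2).intervalIntegrable.1) ((hg.pow 2).intervalIntegrable.1)
    ((hf.mul hg).intervalIntegrable.1)

theorem intervalIntegral.norm_integral_smul_sq_le {E : Type*} [NormedAddCommGroup E]
    [NormedSpace ℝ E] {a b : ℝ} (hab : a ≤ b) {φ : ℝ → ℝ} {q : ℝ → E}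
    (hφ : ContinuousOn φ (Set.Icc a b)) (hq : ContinuousOn q (Set.Icc a b)) :
    ‖∫ t in a..b, φ t • q t‖ ^ 2 ≤ (∫ t in a..b, φ t ^ 2) * ∫ t in a..b, ‖q t‖ ^ 2 := by
  have hnorm : ‖∫ t in a..b, φ t • q t‖ ≤ ∫ t in a..b, |φ t| * ‖q t‖ := by
    simpa only [norm_smul, Real.norm_eq_abs] using
      norm_integral_le_integral_norm (f := fun t => φ t • q t) hab
  calc ‖∫ t in a..b, φ t • q t‖ ^ 2 ≤ (∫ t in a..b, |φ t| * ‖q t‖) ^ 2 := by gcongr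
    _ ≤ (∫ t in a..b, |φ t| ^ 2) * ∫ t in a..b, ‖q t‖ ^ 2 :=
      integral_mul_sq_le_integral_sq_mul_integral_sq hab hφ.abs hq.norm
    _ = (∫ t in a..b, φ t ^ 2) * ∫ t in a..b, ‖q t‖ ^ 2 := by simp only [sq_abs]

theorem intervalIntegral.integral_sub_left_sq (a b : ℝ) :
    ∫ t in a..b, (t - a) ^ 2 = (b - a) ^ 3 / 3 := by
  rw [integral_comp_sub_right (fun t => t ^ 2), sub_self, integral_pow]
  ring

theorem intervalIntegral.integral_sub_smul_eq_smul_deriv_sub_sub {E : Type*}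
    [NormedAddCommGroup E] [NormedSpace ℝ E] [CompleteSpace E] {a b : ℝ} {p p' p'' : ℝ → E}
    (hp : ∀ t ∈ Set.uIcc a b, HasDerivAt p (p' t) t)
    (hp' : ∀ t ∈ Set.uIcc a b, HasDerivAt p' (p'' t) t)
    (hp'' : ContinuousOn p'' (Set.uIcc a b)) :
    ∫ t in a..b, (t - a) • p'' t = (b - a) • p' b - (p b - p a) := by
  have hcont : ContinuousOn p' (Set.uIcc a b) :=
    fun t ht => (hp' t ht).continuousAt.continuousWithinAt
  have hweighted : IntervalIntegrable (fun t => (t - a) • p'' t) MeasureTheory.volume a b :=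
    ((continuousOn_id.sub continuousOn_const).smul hp'').intervalIntegrable
  have hparts : ∫ t in a..b, (p' t + (t - a) • p'' t) = (b - a) • p' b := by
    have hderiv : ∀ t ∈ Set.uIcc a b,
        HasDerivAt (fun s => (s - a) • p' s) (p' t + (t - a) • p'' t) t := fun t ht => by
      simpa only [one_smul, add_comm] using ((hasDerivAt_id' t).sub_const a).fun_smul (hp' t ht)
    simpa using integral_eq_sub_of_hasDerivAt hderiv (hcont.intervalIntegrable.add hweighted)
  rw [← hparts, integral_add hcont.intervalIntegrable hweighted,
    integral_eq_sub_of_hasDerivAt hp hcont.intervalIntegrable]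
  abel

/-- Backward-Euler consistency error:
`‖p′(b) − (p(b) − p(a))/τ‖² ≤ (τ/3) ∫_a^b ‖p″(t)‖² dt` with `τ = b − a`. -/
theorem backward_euler_consistency
    {H : Type*} [NormedAddCommGroup H] [InnerProductSpace ℝ H] [CompleteSpace H]
    {a b : ℝ} (hab : a < b) (τ : ℝ) (hτ : τ = b - a)
    (p p' p'' : ℝ → H)
    (hp : ∀ t ∈ Set.Icc a b, HasDerivAt p (p' t) t)
    (hp' : ∀ t ∈ Set.Icc a b, HasDerivAt p' (p'' t) t)
    (hp'' : ContinuousOn p'' (Set.Icc a b)) :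
    ‖p' b - τ⁻¹ • (p b - p a)‖ ^ 2 ≤ (τ / 3) * ∫ t in a..b, ‖p'' t‖ ^ 2 := by
  have hτ_pos : 0 < τ := by linarith
  rw [← Set.uIcc_of_le hab.le] at hp hp'
  have herror : p' b - τ⁻¹ • (p b - p a) = τ⁻¹ • ∫ t in a..b, (t - a) • p'' t := by
    rw [integral_sub_smul_eq_smul_deriv_sub_sub hp hp' (Set.uIcc_of_le hab.le ▸ hp''), ← hτ,
      smul_sub τ⁻¹ (τ • p' b), smul_smul, inv_mul_cancel₀ hτ_pos.ne', one_smul]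
  calc ‖p' b - τ⁻¹ • (p b - p a)‖ ^ 2 = τ⁻¹ ^ 2 * ‖∫ t in a..b, (t - a) • p'' t‖ ^ 2 := by
        rw [herror, norm_smul, mul_pow, Real.norm_of_nonneg (inv_nonneg.2 hτ_pos.le)]
    _ ≤ τ⁻¹ ^ 2 * ((∫ t in a..b, (t - a) ^ 2) * ∫ t in a..b, ‖p'' t‖ ^ 2) := by
        gcongr
        exact norm_integral_smul_sq_le hab.le (continuousOn_id.sub continuousOn_const) hp''
    _ = (τ / 3) * ∫ t in a..b, ‖p'' t‖ ^ 2 := by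
        rw [integral_sub_left_sq, ← hτ]
        field_simp
end

section
/- Let H be a real Hilbert space, a ∈ ℝ, τ > 0, N a positive integer, and p : ℝ → H a function such that p has derivative p′(t) and p′ has derivative p″(t) at every t ∈ [a, a + Nτ], with p″ continuous on [a, a + Nτ]. Set t_n = a + nτ for n = 0, …, N. Then the accumulated backward-Euler consistency error satisfies Σ_{n=0}^{N−1} ‖p′(t_{n+1}) − (p(t_{n+1}) − p(t_n))/τ‖² ≤ (τ/3) ∫_a^{a+Nτ} ‖p″(t)‖² dt. -/
/-!
On each step, integrating by parts against the weight `t - tₙ` gives the exact error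
`p′(tₙ₊₁) - (p(tₙ₊₁) - p(tₙ))/τ = τ⁻¹ ∫_{tₙ}^{tₙ₊₁} (t - tₙ) p″(t) dt`.
Cauchy–Schwarz with `∫_{tₙ}^{tₙ₊₁} (t - tₙ)² dt = τ³/3` bounds its square by
`(τ/3) ∫_{tₙ}^{tₙ₊₁} ‖p″‖²`, and the integrals over the adjacent steps add up to the one over
`[a, a + Nτ]`.
-/

open intervalIntegral Set
open MeasureTheory (volume)

theorem sq_intervalIntegral_mul_le {f g : ℝ → ℝ} {u v : ℝ} (huv : u ≤ v)
    (hf : ContinuousOn f (uIcc u v)) (hg : ContinuousOn g (uIcc u v)) :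
    (∫ t in u..v, f t * g t) ^ 2 ≤ (∫ t in u..v, f t ^ 2) * ∫ t in u..v, g t ^ 2 := by
  have hff : IntervalIntegrable (fun t => f t ^ 2) volume u v := (hf.pow 2).intervalIntegrable
  have hfg : IntervalIntegrable (fun t => f t * g t) volume u v := (hf.mul hg).intervalIntegrable
  have hgg : IntervalIntegrable (fun t => g t ^ 2) volume u v := (hg.pow 2).intervalIntegrable
  -- `x ↦ ∫ (x f - g)²` is a nonnegative quadratic, so its discriminant is nonpositive.
  have hquad : ∀ x : ℝ, 0 ≤ (∫ t in u..v, f t ^ 2) * (x * x) +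
      (-2 * ∫ t in u..v, f t * g t) * x + ∫ t in u..v, g t ^ 2 := by
    intro x
    calc 0 ≤ ∫ t in u..v, (x * f t - g t) ^ 2 := integral_nonneg huv fun t _ => sq_nonneg _
      _ = ∫ t in u..v, x ^ 2 * f t ^ 2 - 2 * x * (f t * g t) + g t ^ 2 := by
          congr 1
          ext t
          ring
      _ = _ := by
          rw [integral_add ((hff.const_mul _).sub (hfg.const_mul _)) hgg,
            integral_sub (hff.const_mul _) (hfg.const_mul _), integral_const_mul,
            integral_const_mul]
          ring
  have := discrim_le_zero hquad
  rw [discrim] at this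
  linarith

theorem sq_norm_intervalIntegral_smul_le {E : Type*} [NormedAddCommGroup E] [NormedSpace ℝ E]
    {f : ℝ → ℝ} {g : ℝ → E} {u v : ℝ} (huv : u ≤ v)
    (hf : ContinuousOn f (uIcc u v)) (hg : ContinuousOn g (uIcc u v)) :
    ‖∫ t in u..v, f t • g t‖ ^ 2 ≤ (∫ t in u..v, f t ^ 2) * ∫ t in u..v, ‖g t‖ ^ 2 := by
  have hnorm : ‖∫ t in u..v, f t • g t‖ ≤ ∫ t in u..v, |f t| * ‖g t‖ := by
    simpa only [norm_smul, Real.norm_eq_abs] using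
      norm_integral_le_integral_norm (f := fun t => f t • g t) huv
  calc ‖∫ t in u..v, f t • g t‖ ^ 2 ≤ (∫ t in u..v, |f t| * ‖g t‖) ^ 2 :=
        pow_le_pow_left₀ (norm_nonneg _) hnorm 2
    _ ≤ (∫ t in u..v, |f t| ^ 2) * ∫ t in u..v, ‖g t‖ ^ 2 :=
        sq_intervalIntegral_mul_le huv hf.abs hg.norm
    _ = (∫ t in u..v, f t ^ 2) * ∫ t in u..v, ‖g t‖ ^ 2 := by simp only [sq_abs]

section SecondDerivative

variable {E : Type*} [NormedAddCommGroup E] [NormedSpace ℝ E] [CompleteSpace E]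
  {p p' p'' : ℝ → E} {u v : ℝ}

theorem integral_sub_smul_eq_of_hasDerivAt (hp : ∀ t ∈ uIcc u v, HasDerivAt p (p' t) t)
    (hp' : ∀ t ∈ uIcc u v, HasDerivAt p' (p'' t) t) (hp'' : ContinuousOn p'' (uIcc u v)) :
    ∫ t in u..v, (t - u) • p'' t = (v - u) • p' v - (p v - p u) := by
  have hderiv : ∀ t ∈ uIcc u v,
      HasDerivAt (fun s => (s - u) • p' s - p s) ((t - u) • p'' t) t := by
    intro t ht
    refine ((((hasDerivAt_id t).sub_const u).smul (hp' t ht)).sub (hp t ht)).congr_deriv ?_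
    simp
  rw [integral_eq_sub_of_hasDerivAt hderiv ((by fun_prop : Continuous fun t : ℝ => t - u)
    |>.continuousOn.smul hp'').intervalIntegrable]
  simp only [sub_self, zero_smul, zero_sub]
  abel

theorem sq_norm_sub_slope_le (huv : u < v) (hp : ∀ t ∈ Icc u v, HasDerivAt p (p' t) t)
    (hp' : ∀ t ∈ Icc u v, HasDerivAt p' (p'' t) t) (hp'' : ContinuousOn p'' (Icc u v)) :
    ‖p' v - slope p u v‖ ^ 2 ≤ (v - u) / 3 * ∫ t in u..v, ‖p'' t‖ ^ 2 := by
  rw [← uIcc_of_le huv.le] at hp hp' hp''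
  have hh : 0 < v - u := sub_pos.2 huv
  have herr : p' v - slope p u v = (v - u)⁻¹ • ∫ t in u..v, (t - u) • p'' t := by
    rw [integral_sub_smul_eq_of_hasDerivAt hp hp' hp'', slope_def_module,
      smul_sub (v - u)⁻¹ ((v - u) • p' v), smul_smul, inv_mul_cancel₀ hh.ne', one_smul]
  have hweight : ∫ t in u..v, (t - u) ^ 2 = (v - u) ^ 3 / 3 := by
    norm_num [integral_comp_sub_right (fun t => t ^ 2)]
  calc ‖p' v - slope p u v‖ ^ 2 = ((v - u) ^ 2)⁻¹ * ‖∫ t in u..v, (t - u) • p'' t‖ ^ 2 := by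
        rw [herr, norm_smul, mul_pow, Real.norm_of_nonneg (inv_nonneg.2 hh.le), inv_pow]
    _ ≤ ((v - u) ^ 2)⁻¹ * ((∫ t in u..v, (t - u) ^ 2) * ∫ t in u..v, ‖p'' t‖ ^ 2) := by
        gcongr
        exact sq_norm_intervalIntegral_smul_le huv.le (by fun_prop) hp''
    _ = (v - u) / 3 * ∫ t in u..v, ‖p'' t‖ ^ 2 := by
        rw [hweight]
        field_simp

end SecondDerivative

theorem Icc_add_nat_mul_subset (a : ℝ) {τ : ℝ} (hτ : 0 ≤ τ) {n N : ℕ} (hn : n < N) :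
    Icc (a + n * τ) (a + (n + 1) * τ) ⊆ Icc a (a + N * τ) := by
  have hnN : (n : ℝ) + 1 ≤ N := by exact_mod_cast hn
  apply Icc_subset_Icc <;> nlinarith

theorem sum_integral_add_nat_mul {E : Type*} [NormedAddCommGroup E] [NormedSpace ℝ E]
    {f : ℝ → E} (a : ℝ) {τ : ℝ} (hτ : 0 ≤ τ) (N : ℕ)
    (hf : IntervalIntegrable f volume a (a + N * τ)) :
    ∑ n ∈ Finset.range N, ∫ t in (a + n * τ)..(a + (n + 1) * τ), f t =
      ∫ t in a..(a + N * τ), f t := by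
  have hpiece : ∀ n < N, IntervalIntegrable f volume (a + n * τ) (a + ((n + 1 : ℕ) : ℝ) * τ) := by
    intro n hn
    refine hf.mono_set ?_
    push_cast
    rw [uIcc_of_le (by nlinarith), uIcc_of_le (le_add_of_nonneg_right (by positivity))]
    exact Icc_add_nat_mul_subset a hτ hn
  simpa using sum_integral_adjacent_intervals (a := fun n : ℕ => a + n * τ) hpiece

theorem sum_backward_euler_consistency_general
    {H : Type*} [NormedAddCommGroup H] [InnerProductSpace ℝ H] [CompleteSpace H]
    (a : ℝ) {τ : ℝ} (hτ : 0 < τ) {N : ℕ} (p p' p'' : ℝ → H)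
    (hp : ∀ t ∈ Set.Icc a (a + N * τ), HasDerivAt p (p' t) t)
    (hp' : ∀ t ∈ Set.Icc a (a + N * τ), HasDerivAt p' (p'' t) t)
    (hp'' : ContinuousOn p'' (Set.Icc a (a + N * τ))) :
    ∑ n ∈ Finset.range N,
        ‖p' (a + (n + 1) * τ) - τ⁻¹ • (p (a + (n + 1) * τ) - p (a + n * τ))‖ ^ 2 ≤
      (τ / 3) * ∫ t in a..(a + N * τ), ‖p'' t‖ ^ 2 := by
  have hstep : ∀ n ∈ Finset.range N,
      ‖p' (a + (n + 1) * τ) - τ⁻¹ • (p (a + (n + 1) * τ) - p (a + n * τ))‖ ^ 2 ≤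
        (τ / 3) * ∫ t in (a + n * τ)..(a + (n + 1) * τ), ‖p'' t‖ ^ 2 := by
    intro n hn
    have hsub := Icc_add_nat_mul_subset a hτ.le (Finset.mem_range.1 hn)
    have hlen : a + (n + 1) * τ - (a + n * τ) = τ := by ring
    have := sq_norm_sub_slope_le (by linarith) (fun t ht => hp t (hsub ht))
      (fun t ht => hp' t (hsub ht)) (hp''.mono hsub)
    rwa [slope_def_module, hlen] at this
  calc _ ≤ ∑ n ∈ Finset.range N, (τ / 3) * ∫ t in (a + n * τ)..(a + (n + 1) * τ), ‖p'' t‖ ^ 2 :=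
        Finset.sum_le_sum hstep
    _ = (τ / 3) * ∫ t in a..(a + N * τ), ‖p'' t‖ ^ 2 := by
        rw [← Finset.mul_sum, sum_integral_add_nat_mul (f := fun t => ‖p'' t‖ ^ 2) a hτ.le N
          ((hp''.norm.pow 2).intervalIntegrable_of_Icc (le_add_of_nonneg_right (by positivity)))]

/-- Accumulated backward-Euler consistency error:
`Σ_{n=0}^{N−1} ‖p′(t_{n+1}) − (p(t_{n+1}) − p(t_n))/τ‖² ≤ (τ/3) ∫_a^{a+Nτ} ‖p″(t)‖² dt`
where `t_n = a + nτ`. -/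
theorem sum_backward_euler_consistency
    {H : Type*} [NormedAddCommGroup H] [InnerProductSpace ℝ H] [CompleteSpace H]
    (a : ℝ) {τ : ℝ} (hτ : 0 < τ) {N : ℕ} (hN : 0 < N) (p p' p'' : ℝ → H)
    (hp : ∀ t ∈ Set.Icc a (a + N * τ), HasDerivAt p (p' t) t)
    (hp' : ∀ t ∈ Set.Icc a (a + N * τ), HasDerivAt p' (p'' t) t)
    (hp'' : ContinuousOn p'' (Set.Icc a (a + N * τ))) :
    ∑ n ∈ Finset.range N,
        ‖p' (a + (n + 1) * τ) - τ⁻¹ • (p (a + (n + 1) * τ) - p (a + n * τ))‖ ^ 2 ≤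
      (τ / 3) * ∫ t in a..(a + N * τ), ‖p'' t‖ ^ 2 :=
  sum_backward_euler_consistency_general a hτ p p' p'' hp hp' hp''
end
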